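/- The unnormalized cochain complex of the cosimplicial abelian group D[q] (the componentwise linear dual of the free simplicial abelian group on the standard q-simplex) has trivial cohomology in all positive degrees: H^i(N(D[q])) = 0 for i ≥ 1, and H^0(N(D[q])) ≅ ℤ. -/

import Mathlib

/-- The `n`-th component of the cosimplicial abelian group `D[q]`: the
ℤ-linear dual of the free abelian group `M[q]_n` on the `n`-simplices of the
standard simplicial `q`-simplex `Δ[q]`, i.e. on the monotone sequences
`0 ≤ a_0 ≤ … ≤ a_n ≤ q` (= monotone maps `Fin (n+1) → Fin (q+1)`).  Such a
dual is identified with the group of all ℤ-valued functions on the basis. -/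
abbrev Dq (q n : ℕ) : Type := (Fin (n + 1) →o Fin (q + 1)) → ℤ

/-- The coface `d_i : D[q]^n → D[q]^{n+1}`, dual to the `i`-th face of
`Δ[q]` (precomposition with the monotone injection missing `i`). -/
def dualFace (q n : ℕ) (i : Fin (n + 2)) : Dq q n →+ Dq q (n + 1) where
  toFun φ := fun b => φ (b.comp ⟨Fin.succAbove i, (Fin.strictMono_succAbove i).monotone⟩)
  map_zero' := rfl
  map_add' := fun _ _ => rfl

/-- The differential of the unnormalized cochain complex `N(D[q])`:
the alternating sum of the cofaces. -/
def NDiffD (q n : ℕ) : Dq q n →+ Dq q (n + 1) :=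
  ∑ i : Fin (n + 2), ((-1 : ℤ) ^ (i : ℕ)) • dualFace q n i

/-!
`Δ[q]` is a cone with apex `0`: prepending the vertex `0` to a simplex is an extra degeneracy.
Dually, `h φ (b) = φ (0, b)` satisfies `d h + h d = id` on `N(D[q])` in positive degrees, so every
positive-degree cocycle `φ` is the coboundary of `h φ`. In degree `0` the same computation reads
`dψ (0, b) = ψ b - ψ 0`, so the `0`-cocycles are exactly the constant functions.
-/

abbrev faceMap {n : ℕ} (i : Fin (n + 2)) : Fin (n + 1) →o Fin (n + 2) :=
  ⟨Fin.succAbove i, (Fin.strictMono_succAbove i).monotone⟩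

/-- `(a_0,…,a_n) ↦ (0,a_0,…,a_n)`. -/
def coneSimplex {q n : ℕ} (b : Fin (n + 1) →o Fin (q + 1)) : Fin (n + 2) →o Fin (q + 1) :=
  ⟨Matrix.vecCons 0 b, b.monotone.vecCons (Fin.zero_le _)⟩

def vertexZero (q : ℕ) : Fin 1 →o Fin (q + 1) := OrderHom.const _ 0

def coneHomotopy (q n : ℕ) : Dq q (n + 1) →+ Dq q n where
  toFun φ b := φ (coneSimplex b)
  map_zero' := rfl
  map_add' _ _ := rfl

section

variable {q n : ℕ}

lemma NDiffD_apply (φ : Dq q n) (b : Fin (n + 2) →o Fin (q + 1)) :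
    NDiffD q n φ b = ∑ i : Fin (n + 2), (-1 : ℤ) ^ (i : ℕ) * φ (b.comp (faceMap i)) := by
  simp [NDiffD, dualFace, Finset.sum_apply]

lemma coneSimplex_comp_faceMap_zero (b : Fin (n + 1) →o Fin (q + 1)) :
    (coneSimplex b).comp (faceMap 0) = b := by
  ext j
  simp [coneSimplex]

lemma coneSimplex_comp_faceMap_succ (b : Fin (n + 2) →o Fin (q + 1)) (i : Fin (n + 2)) :
    (coneSimplex b).comp (faceMap i.succ) = coneSimplex (b.comp (faceMap i)) := by
  ext j
  induction j using Fin.cases <;> simp [coneSimplex, Fin.succ_succAbove_succ]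

lemma coneSimplex_comp_faceMap_one (b : Fin 1 →o Fin (q + 1)) :
    (coneSimplex b).comp (faceMap 1) = vertexZero q := by
  ext j
  rw [Fin.fin_one_eq_zero j]
  rfl

/-- Evaluating a coboundary on a cone: the cone face of `coneSimplex b` is `b`, every other
face is the cone on a face of `b`. -/
lemma NDiffD_apply_coneSimplex (φ : Dq q (n + 1)) (b : Fin (n + 2) →o Fin (q + 1)) :
    NDiffD q (n + 1) φ (coneSimplex b) = φ b - NDiffD q n (coneHomotopy q n φ) b := by
  rw [NDiffD_apply, Fin.sum_univ_succ, NDiffD_apply, sub_eq_add_neg, ← Finset.sum_neg_distrib]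
  simp only [coneSimplex_comp_faceMap_succ, coneSimplex_comp_faceMap_zero, Fin.val_succ,
    Fin.val_zero, pow_zero, one_mul, pow_succ, coneHomotopy, AddMonoidHom.coe_mk, ZeroHom.coe_mk]
  congr 1
  exact Finset.sum_congr rfl fun i _ => by ring

theorem NDiffD_coneHomotopy_add (φ : Dq q (n + 1)) :
    NDiffD q n (coneHomotopy q n φ) + coneHomotopy q (n + 1) (NDiffD q (n + 1) φ) = φ := by
  funext b
  simp only [Pi.add_apply, coneHomotopy, AddMonoidHom.coe_mk, ZeroHom.coe_mk,
    NDiffD_apply_coneSimplex]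
  ring

lemma NDiffD_zero_apply_coneSimplex (ψ : Dq q 0) (b : Fin 1 →o Fin (q + 1)) :
    NDiffD q 0 ψ (coneSimplex b) = ψ b - ψ (vertexZero q) := by
  rw [NDiffD_apply, Fin.sum_univ_two, coneSimplex_comp_faceMap_zero,
    coneSimplex_comp_faceMap_one]
  simp [sub_eq_add_neg]

lemma NDiffD_zero_const (z : ℤ) : NDiffD q 0 (fun _ => z) = 0 := by
  funext b
  simp [NDiffD_apply, Fin.sum_univ_two]

lemma eq_of_mem_ker_NDiffD_zero {ψ : Dq q 0} (hψ : ψ ∈ (NDiffD q 0).ker)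
    (b : Fin 1 →o Fin (q + 1)) : ψ b = ψ (vertexZero q) := by
  have hcone := NDiffD_zero_apply_coneSimplex ψ b
  rw [AddMonoidHom.mem_ker.mp hψ] at hcone
  exact sub_eq_zero.mp hcone.symm

end

def kerNDiffDZeroEquiv (q : ℕ) : (NDiffD q 0).ker ≃+ ℤ where
  toFun ψ := ψ.1 (vertexZero q)
  invFun z := ⟨fun _ => z, NDiffD_zero_const z⟩
  left_inv ψ := Subtype.ext <| funext fun b => (eq_of_mem_ker_NDiffD_zero ψ.2 b).symm
  right_inv _ := rfl
  map_add' _ _ := rfl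

theorem cohomology_of_Dq (q : ℕ) :
    -- `H^i = 0` for `i ≥ 1`: every cocycle in positive degree is a coboundary
    (∀ (n : ℕ) (φ : Dq q (n + 1)), NDiffD q (n + 1) φ = 0 →
       ∃ ψ : Dq q n, NDiffD q n ψ = φ)
    ∧
    -- `H^0 ≅ ℤ`: the kernel of the 0-th differential is infinite cyclic
    Nonempty (↥(AddMonoidHom.ker (NDiffD q 0)) ≃+ ℤ) := by
  refine ⟨fun n φ hφ => ⟨coneHomotopy q n φ, ?_⟩, ⟨kerNDiffDZeroEquiv q⟩⟩
  simpa [hφ] using NDiffD_coneHomotopy_add φ
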